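/- Let A be a commutative ring, I a finitely generated ideal containing a non-zerodivisor, and f ∈ A. Then f is integral over I if and only if there exists a finitely generated faithful A-module M with fM ⊆ IM. -/

import Mathlib

/-- `f` is integral over the ideal `I`: there is an equation
`f^k + a₁ f^(k-1) + ⋯ + a_k = 0` with `aᵢ ∈ Iⁱ` (and `k ≥ 1`). -/
def IsIntegralOverIdeal {A : Type*} [CommRing A] (I : Ideal A) (f : A) : Prop :=
  ∃ (k : ℕ) (a : ℕ → A), 0 < k ∧ (∀ i ∈ Finset.Icc 1 k, a i ∈ I ^ i) ∧
    f ^ k + ∑ i ∈ Finset.Icc 1 k, a i * f ^ (k - i) = 0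

universe u

/-!
If `f^(n+1) + a₁ fⁿ + ⋯ + a_(n+1) = 0` with `aᵢ ∈ Iⁱ`, the equation puts `f^(n+1)` in `I J` for
`J = (I + (f))ⁿ`, whence `(f) J ⊆ I J + (f)^(n+1) ⊆ I J`. This `J` is finitely generated, and it is
faithful because it contains the non-zerodivisor `rⁿ` for a non-zerodivisor `r ∈ I`.
Conversely, if `f M ⊆ I M` with `M` finitely generated, Cayley–Hamilton gives a monic `p` whose
coefficient of `X^(deg p - i)` lies in `Iⁱ` and with `p(f) M = 0`; faithfulness gives `p(f) = 0`.
-/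

open Ideal Polynomial

variable {A : Type u} [CommRing A]

namespace Ideal

theorem mul_add_pow_le (I F : Ideal A) (m : ℕ) :
    F * (I + F) ^ m ≤ I * (I + F) ^ m + F ^ (m + 1) := by
  induction m with
  | zero => simp
  | succ m ih =>
    have hFI : F ^ (m + 1) * I ≤ I * (I + F) ^ (m + 1) := by
      rw [mul_comm]
      exact mul_mono_right (pow_le_pow_left' le_sup_right _)
    calc F * (I + F) ^ (m + 1) = F * (I + F) ^ m * (I + F) := by ring
      _ ≤ (I * (I + F) ^ m + F ^ (m + 1)) * (I + F) := mul_mono_left ih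
      _ = I * (I + F) ^ (m + 1) + (F ^ (m + 1) * I + F ^ (m + 2)) := by ring
      _ ≤ I * (I + F) ^ (m + 1) + F ^ (m + 2) :=
        sup_le le_sup_left (sup_le (hFI.trans le_sup_left) le_sup_right)

theorem pow_mul_pow_le_add_pow (I F : Ideal A) (i j : ℕ) : I ^ i * F ^ j ≤ (I + F) ^ (i + j) :=
  pow_add (I + F) i j ▸ mul_mono (pow_le_pow_left' le_sup_left _) (pow_le_pow_left' le_sup_right _)

theorem pow_mem_mul_add_span_pow {I : Ideal A} {f : A} {n : ℕ} {a : ℕ → A}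
    (ha : ∀ i ∈ Finset.Icc 1 (n + 1), a i ∈ I ^ i)
    (heq : f ^ (n + 1) + ∑ i ∈ Finset.Icc 1 (n + 1), a i * f ^ (n + 1 - i) = 0) :
    f ^ (n + 1) ∈ I * (I + span {f}) ^ n := by
  rw [eq_neg_of_add_eq_zero_left heq]
  refine neg_mem (sum_mem _ fun i hi => ?_)
  obtain ⟨hi1, hin⟩ := Finset.mem_Icc.mp hi
  obtain ⟨j, rfl⟩ := Nat.exists_eq_add_one_of_ne_zero (Nat.one_le_iff_ne_zero.mp hi1)
  have hmem : a (j + 1) * f ^ (n + 1 - (j + 1)) ∈ I * (I ^ j * span {f} ^ (n - j)) := by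
    rw [← mul_assoc, ← pow_succ', Nat.add_sub_add_right]
    exact mul_mem_mul (ha _ hi) (pow_mem_pow (mem_span_singleton_self f) _)
  have hjn : j + (n - j) = n := by omega
  have hle : I ^ j * span {f} ^ (n - j) ≤ (I + span {f}) ^ n := by
    simpa only [hjn] using pow_mul_pow_le_add_pow I (span {f}) j (n - j)
  exact mul_mono_right hle hmem

theorem smul_mem_smul_top_of_span_singleton_mul_le {I J : Ideal A} {f : A}
    (h : span {f} * J ≤ I * J) (m : J) : f • m ∈ I • (⊤ : Submodule A J) := by
  rw [Submodule.mem_smul_top_iff, Submodule.coe_smul, smul_eq_mul]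
  exact h (mul_mem_mul (mem_span_singleton_self f) m.2)

theorem eq_zero_of_forall_smul_eq_zero {J : Ideal A} {r : A} (hrJ : r ∈ J)
    (hr : r ∈ nonZeroDivisors A) {a : A} (ha : ∀ m : J, a • m = 0) : a = 0 :=
  mem_nonZeroDivisors_iff_right.mp hr a (congrArg Subtype.val (ha ⟨r, hrJ⟩))

end Ideal

theorem IsIntegralOverIdeal.exists_span_singleton_mul_le {I : Ideal A} {f : A}
    (hf : IsIntegralOverIdeal I f) :
    ∃ n : ℕ, span {f} * (I + span {f}) ^ n ≤ I * (I + span {f}) ^ n := by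
  obtain ⟨k, a, hk, ha, heq⟩ := hf
  obtain ⟨n, rfl⟩ := Nat.exists_eq_add_one_of_ne_zero hk.ne'
  refine ⟨n, (mul_add_pow_le I _ n).trans (sup_le le_rfl ?_)⟩
  rw [span_singleton_pow, span_le, Set.singleton_subset_iff]
  exact pow_mem_mul_add_span_pow ha heq

theorem IsIntegralOverIdeal.exists_faithful_module {I : Ideal A} (hfg : I.FG)
    (hnzd : ∃ r ∈ I, r ∈ nonZeroDivisors A) {f : A} (hf : IsIntegralOverIdeal I f) :
    ∃ (M : Type u) (_ : AddCommGroup M) (_ : Module A M),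
      Module.Finite A M ∧
      (∀ m : M, f • m ∈ I • (⊤ : Submodule A M)) ∧
      (∀ a : A, (∀ m : M, a • m = 0) → a = 0) := by
  obtain ⟨n, hn⟩ := hf.exists_span_singleton_mul_le
  obtain ⟨r, hrI, hr⟩ := hnzd
  have hrJ : r ^ n ∈ (I + span {f}) ^ n := pow_mem_pow (mem_sup_left hrI) n
  exact ⟨(I + span {f}) ^ n, inferInstance, inferInstance,
    Module.Finite.iff_fg.mpr ((Submodule.FG.sup hfg (Submodule.fg_span_singleton f)).pow n),
    smul_mem_smul_top_of_span_singleton_mul_le hn,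
    fun _ ha => eq_zero_of_forall_smul_eq_zero hrJ (pow_mem hr n) ha⟩

theorem IsIntegralOverIdeal.of_monic_of_eval_eq_zero {I : Ideal A} {f : A} {p : A[X]}
    (hp : p.Monic) (hcoeff : ∀ i, p.coeff i ∈ I ^ (p.natDegree - i)) (hf : p.eval f = 0) :
    IsIntegralOverIdeal I f := by
  rcases Nat.eq_zero_or_pos p.natDegree with h0 | hpos
  · rw [hp.natDegree_eq_zero.mp h0, eval_one] at hf
    have := subsingleton_of_zero_eq_one hf.symm
    exact ⟨1, 0, one_pos, fun _ _ => zero_mem _, Subsingleton.elim _ _⟩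
  refine ⟨p.natDegree, fun i => p.coeff (p.natDegree - i), hpos, fun i hi => ?_, ?_⟩
  · simpa [Nat.sub_sub_self (Finset.mem_Icc.mp hi).2] using hcoeff (p.natDegree - i)
  · rw [← Finset.Ico_add_one_right_eq_Icc,
      Finset.sum_Ico_reflect (fun j => p.coeff j * f ^ j) 1 le_rfl]
    rw [eval_eq_sum_range, Finset.sum_range_succ, hp.coeff_natDegree, one_mul, add_comm] at hf
    simpa using hf

theorem IsIntegralOverIdeal.of_faithful_module {M : Type*} [AddCommGroup M] [Module A M]
    [Module.Finite A M] {I : Ideal A} {f : A} (hsub : ∀ m : M, f • m ∈ I • (⊤ : Submodule A M))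
    (hfaith : ∀ a : A, (∀ m : M, a • m = 0) → a = 0) : IsIntegralOverIdeal I f := by
  obtain ⟨p, hp, -, hcoeff, hzero⟩ :=
    LinearMap.exists_monic_and_natDegree_eq_and_coeff_mem_pow_and_aeval_eq_zero A
      (algebraMap A (Module.End A M) f) I (by rintro _ ⟨m, rfl⟩; exact hsub m)
  refine .of_monic_of_eval_eq_zero hp hcoeff (hfaith _ fun m => ?_)
  have := LinearMap.congr_fun hzero m
  rwa [aeval_algebraMap_apply_eq_algebraMap_eval, Module.algebraMap_end_apply] at this

/-- If `I` is finitely generated and contains a non-zerodivisor, then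
`f` is integral over `I` iff there is a finitely generated *faithful* `A`-module `M`
with `f·M ⊆ I·M`. -/
theorem isIntegralOverIdeal_iff_exists_faithful_module {A : Type u} [CommRing A]
    (I : Ideal A) (hfg : I.FG) (hnzd : ∃ r ∈ I, r ∈ nonZeroDivisors A) (f : A) :
    IsIntegralOverIdeal I f ↔
      ∃ (M : Type u) (_ : AddCommGroup M) (_ : Module A M),
        Module.Finite A M ∧
        (∀ m : M, f • m ∈ I • (⊤ : Submodule A M)) ∧
        (∀ a : A, (∀ m : M, a • m = 0) → a = 0) :=
  ⟨IsIntegralOverIdeal.exists_faithful_module hfg hnzd,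
    fun ⟨_, _, _, _, hsub, hfaith⟩ => .of_faithful_module hsub hfaith⟩
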